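/- arXiv:1609.07652 — 2 statements merged into one kernel-verified Lean document; each statement's English description precedes it below -/
import Mathlib

section
/- Let κ, m ∈ ℝ and let f : ℝ → ℝ with m ≠ −1. Suppose u : ℝ → ℝ → ℝ is C² on ℝ × (0,∞), u_r(t,r) ≠ 0 for all t ∈ ℝ and r > 0, and u satisfies u_t(t,r) = κ·(u_rr(t,r) − (m/r)·u_r(t,r))/u_r(t,r)² + f(u(t,r)) for all t ∈ ℝ and r > 0. Suppose w : ℝ → ℝ → ℝ is C² on ℝ² and satisfies the hodograph relation w(t, u(t,r)) = r^(m+1)/(m+1) for all t ∈ ℝ and r > 0. Then for all t ∈ ℝ and r > 0, setting z = u(t,r), one has w_t(t,z) = κ·w_zz(t,z) − f(z)·w_z(t,z); that is, w satisfies a linear diffusion equation at every point in the image of the map (t,r) ↦ (t, u(t,r)). -/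
noncomputable section

/-- Partial derivative in the first (time) variable. -/
def partial_t (u : ℝ → ℝ → ℝ) (t r : ℝ) : ℝ := deriv (fun s => u s r) t

/-- Partial derivative in the second (space) variable. -/
def partial_r (u : ℝ → ℝ → ℝ) (t r : ℝ) : ℝ := deriv (fun s => u t s) r

/-- Second partial derivative in the second (space) variable. -/
def partial_rr (u : ℝ → ℝ → ℝ) (t r : ℝ) : ℝ := deriv (deriv (fun s => u t s)) r

/-- Mixed partial derivative: first in space, then in time. -/
def partial_tr (u : ℝ → ℝ → ℝ) (t r : ℝ) : ℝ := deriv (fun s => deriv (fun y => u s y) r) t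

/-- `u` is C² on ℝ × (0,∞): `u`, `u_t`, `u_r`, `u_rr` and the mixed partial `u_tr`
exist and are continuous there. -/
def IsC2On (u : ℝ → ℝ → ℝ) : Prop :=
  (∀ t r : ℝ, 0 < r → DifferentiableAt ℝ (fun s => u s r) t) ∧
  (∀ t r : ℝ, 0 < r → DifferentiableAt ℝ (fun s => u t s) r) ∧
  (∀ t r : ℝ, 0 < r → DifferentiableAt ℝ (deriv (fun s => u t s)) r) ∧
  (∀ t r : ℝ, 0 < r → DifferentiableAt ℝ (fun s => deriv (fun y => u s y) r) t) ∧
  ContinuousOn (fun q : ℝ × ℝ => u q.1 q.2) {q : ℝ × ℝ | 0 < q.2} ∧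
  ContinuousOn (fun q : ℝ × ℝ => partial_t u q.1 q.2) {q : ℝ × ℝ | 0 < q.2} ∧
  ContinuousOn (fun q : ℝ × ℝ => partial_r u q.1 q.2) {q : ℝ × ℝ | 0 < q.2} ∧
  ContinuousOn (fun q : ℝ × ℝ => partial_rr u q.1 q.2) {q : ℝ × ℝ | 0 < q.2} ∧
  ContinuousOn (fun q : ℝ × ℝ => partial_tr u q.1 q.2) {q : ℝ × ℝ | 0 < q.2}

/-!
Differentiating the hodograph relation `w(t, u(t,r)) = r^(m+1)/(m+1)` once in `r`, once in `t`
and twice in `r` gives `w_z u_r = r^m`, `w_t + u_t w_z = 0` and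
`w_zz u_r² + w_z u_rr = m r^(m-1)`. The last two together with the first turn
`w_z (u_rr - (m/r) u_r)` into `-w_zz u_r²`, so substituting the equation for `u_t` into
`w_t = -u_t w_z` leaves `w_t = κ w_zz - f w_z`.
-/

open Function Filter Topology

section ChainRule

variable {w : ℝ → ℝ → ℝ}

theorem partial_t_eq_fderiv {a z : ℝ} (hw : DifferentiableAt ℝ (uncurry w) (a, z)) :
    partial_t w a z = fderiv ℝ (uncurry w) (a, z) (1, 0) :=
  (hw.hasFDerivAt.comp_hasDerivAt (f := fun s => (s, z)) a
    ((hasDerivAt_id a).prodMk (hasDerivAt_const a z))).deriv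

theorem partial_r_eq_fderiv {a z : ℝ} (hw : DifferentiableAt ℝ (uncurry w) (a, z)) :
    partial_r w a z = fderiv ℝ (uncurry w) (a, z) (0, 1) :=
  (hw.hasFDerivAt.comp_hasDerivAt (f := fun s => (a, s)) z
    ((hasDerivAt_const z a).prodMk (hasDerivAt_id z))).deriv

theorem hasDerivAt_uncurry_comp {α β : ℝ → ℝ} {α' β' x : ℝ}
    (hw : DifferentiableAt ℝ (uncurry w) (α x, β x))
    (hα : HasDerivAt α α' x) (hβ : HasDerivAt β β' x) :
    HasDerivAt (fun s => w (α s) (β s))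
      (α' * partial_t w (α x) (β x) + β' * partial_r w (α x) (β x)) x := by
  have hsplit : ((α', β') : ℝ × ℝ) = α' • ((1, 0) : ℝ × ℝ) + β' • ((0, 1) : ℝ × ℝ) := by simp
  have h := hw.hasFDerivAt.comp_hasDerivAt x (hα.prodMk hβ)
  rwa [hsplit, map_add, map_smul, map_smul, smul_eq_mul, smul_eq_mul,
    ← partial_t_eq_fderiv hw, ← partial_r_eq_fderiv hw] at h

theorem partial_rr_eq_partial_r_partial_r : partial_rr w = partial_r (partial_r w) := rfl

theorem ContDiff.uncurry_partial_r {n : WithTop ℕ∞} (hw : ContDiff ℝ (n + 1) (uncurry w)) :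
    ContDiff ℝ n (uncurry (partial_r w)) := by
  have hd : Differentiable ℝ (uncurry w) := hw.differentiable (by simp)
  have heq : uncurry (partial_r w) = fun p => fderiv ℝ (uncurry w) p (0, 1) :=
    funext fun p => partial_r_eq_fderiv (hd p)
  rw [heq]
  exact (hw.fderiv_right le_rfl).clm_apply contDiff_const

end ChainRule

section Hodograph

variable {w u : ℝ → ℝ → ℝ} {t r : ℝ}

theorem partial_t_add_mul_partial_r_eq_zero_of_comp_const {c : ℝ}
    (hw : DifferentiableAt ℝ (uncurry w) (t, u t r))
    (hu : DifferentiableAt ℝ (fun s => u s r) t)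
    (hcomp : (fun s => w s (u s r)) =ᶠ[𝓝 t] fun _ => c) :
    partial_t w t (u t r) + partial_t u t r * partial_r w t (u t r) = 0 := by
  have hu' : HasDerivAt (fun s => u s r) (partial_t u t r) t := hu.hasDerivAt
  have h := hasDerivAt_uncurry_comp hw (hasDerivAt_id' t) hu'
  have h0 := (h.congr_of_eventuallyEq hcomp.symm).unique (hasDerivAt_const t c)
  linear_combination h0

theorem partial_r_mul_partial_r_of_comp_eq {Φ : ℝ → ℝ} {φ : ℝ}
    (hw : DifferentiableAt ℝ (uncurry w) (t, u t r))
    (hu : DifferentiableAt ℝ (fun s => u t s) r) (hΦ : HasDerivAt Φ φ r)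
    (hcomp : (fun s => w t (u t s)) =ᶠ[𝓝 r] Φ) :
    partial_r w t (u t r) * partial_r u t r = φ := by
  have hu' : HasDerivAt (fun s => u t s) (partial_r u t r) r := hu.hasDerivAt
  have h := hasDerivAt_uncurry_comp hw (hasDerivAt_const r t) hu'
  have h0 := (h.congr_of_eventuallyEq hcomp.symm).unique hΦ
  linear_combination h0

theorem partial_rr_mul_sq_add_of_comp_eq {Φ φ : ℝ → ℝ} {φ' : ℝ}
    (hw : Differentiable ℝ (uncurry w))
    (hwr : DifferentiableAt ℝ (uncurry (partial_r w)) (t, u t r))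
    (hu : ∀ᶠ s in 𝓝 r, DifferentiableAt ℝ (fun s => u t s) s)
    (hur : DifferentiableAt ℝ (partial_r u t) r)
    (hΦ : ∀ᶠ s in 𝓝 r, HasDerivAt Φ (φ s) s) (hφ : HasDerivAt φ φ' r)
    (hcomp : (fun s => w t (u t s)) =ᶠ[𝓝 r] Φ) :
    partial_rr w t (u t r) * partial_r u t r ^ 2 + partial_r w t (u t r) * partial_rr u t r
      = φ' := by
  have hfirst : (fun s => partial_r w t (u t s) * partial_r u t s) =ᶠ[𝓝 r] φ := by
    filter_upwards [hu, hΦ, hcomp.eventually_nhds] with s hus hΦs hcomps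
    exact partial_r_mul_partial_r_of_comp_eq (hw _) hus hΦs hcomps
  have hu' : HasDerivAt (fun s => u t s) (partial_r u t r) r := hu.self_of_nhds.hasDerivAt
  have hur' : HasDerivAt (partial_r u t) (partial_rr u t r) r := hur.hasDerivAt
  have hwr' := hasDerivAt_uncurry_comp hwr (hasDerivAt_const r t) hu'
  have h0 := ((hwr'.mul hur').congr_of_eventuallyEq hfirst.symm).unique hφ
  rw [partial_rr_eq_partial_r_partial_r]
  linear_combination h0

end Hodograph

theorem hasDerivAt_rpow_add_one_div {m r : ℝ} (hm : m ≠ -1) (hr : 0 < r) :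
    HasDerivAt (fun s : ℝ => s ^ (m + 1) / (m + 1)) (r ^ m) r := by
  have hm1 : m + 1 ≠ 0 := fun h => hm (by linarith)
  refine ((Real.hasDerivAt_rpow_const (Or.inl hr.ne')).div_const (m + 1)).congr_deriv ?_
  rw [add_sub_cancel_right]
  field_simp

/-- Hodograph transformation: the equation with diffusivity `h(v) = -κ/v` and
source `f` is mapped to a linear diffusion equation. -/
theorem hodograph_general_f (κ m : ℝ) (f : ℝ → ℝ) (hm : m ≠ -1)
    (u : ℝ → ℝ → ℝ) (hu : IsC2On u)
    (hur : ∀ t r : ℝ, 0 < r → partial_r u t r ≠ 0)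
    (hpde : ∀ t r : ℝ, 0 < r →
      partial_t u t r
        = κ * (partial_rr u t r - (m / r) * partial_r u t r) / (partial_r u t r) ^ 2
          + f (u t r))
    (w : ℝ → ℝ → ℝ) (hw : ContDiff ℝ 2 (Function.uncurry w))
    (hhod : ∀ t r : ℝ, 0 < r → w t (u t r) = r ^ (m + 1) / (m + 1)) :
    ∀ t r : ℝ, 0 < r →
      partial_t w t (u t r)
        = κ * partial_rr w t (u t r) - f (u t r) * partial_r w t (u t r) := by
  intro t r hr
  obtain ⟨hu_t, hu_r, hu_rr, -⟩ := hu
  have hwd : Differentiable ℝ (uncurry w) := hw.differentiable (by norm_num)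
  have hwrd : Differentiable ℝ (uncurry (partial_r w)) :=
    (hw.uncurry_partial_r (n := 1)).differentiable one_ne_zero
  have hpos : ∀ᶠ s in 𝓝 r, 0 < s := lt_mem_nhds hr
  have hcomp : (fun s => w t (u t s)) =ᶠ[𝓝 r] fun s => s ^ (m + 1) / (m + 1) :=
    hpos.mono fun s hs => hhod t s hs
  have hfirst := partial_r_mul_partial_r_of_comp_eq (hwd _) (hu_r t r hr)
    (hasDerivAt_rpow_add_one_div hm hr) hcomp
  have hsecond := partial_rr_mul_sq_add_of_comp_eq hwd (hwrd _)
    (hpos.mono fun s hs => hu_r t s hs) (hu_rr t r hr)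
    (hpos.mono fun s hs => hasDerivAt_rpow_add_one_div hm hs)
    (Real.hasDerivAt_rpow_const (Or.inl hr.ne')) hcomp
  have htime := partial_t_add_mul_partial_r_eq_zero_of_comp_const (hwd _) (hu_t t r hr)
    (Eventually.of_forall fun s => hhod s r hr)
  have hrpow : r ^ (m - 1) * r = r ^ m := by
    rw [← Real.rpow_add_one hr.ne']
    norm_num
  have hur0 := hur t r hr
  rw [hpde t r hr] at htime
  linear_combination (norm := (field_simp; ring)) htime
    - κ / partial_r u t r ^ 2 * hsecond
    + κ * m / (r * partial_r u t r ^ 2) * (hfirst - hrpow)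
end
end

section
/- Let κ, k, m, ε, p, q ∈ ℝ with p ∉ {−1, 0, 1} and q ≠ 0. Suppose u : ℝ → ℝ → ℝ is C² on ℝ × (0,∞), u_r(t,r) > 0 for all t ∈ ℝ and r > 0, and u satisfies u_t(t,r) = −κ·(p·u_r(t,r)^(p−1)·u_rr(t,r) + (m/r)·u_r(t,r)^p) + k·exp(q·u(t,r)) for all t ∈ ℝ and r > 0, where all powers are real powers (Real.rpow). Define v(t,r) = u(exp(−(p+1)·q·ε)·t, exp(−q·ε)·r) − (p+1)·ε. Then v_r(t,r) > 0 and v satisfies the same equation, v_t = −κ·(p·v_r^(p−1)·v_rr + (m/r)·v_r^p) + k·exp(q·v), for all t ∈ ℝ and r > 0. -/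
noncomputable section

/-!
Under `t ↦ a t`, `r ↦ b r`, `u ↦ u - c` the time derivative picks up a factor `a`, the
diffusion term `p u_r^(p-1) u_rr + (m/r) u_r^p` a factor `b^(p+1)`, and the source `exp (q u)`
a factor `exp (-q c)`. With `b = exp (-q ε)`, `c = (p+1) ε` and `a = exp (-(p+1) q ε)`
all three factors agree, so the equation is preserved.
-/

def rescale (u : ℝ → ℝ → ℝ) (a b c : ℝ) (t r : ℝ) : ℝ := u (a * t) (b * r) - c

def SolvesDiffusionReaction (κ k m p q : ℝ) (u : ℝ → ℝ → ℝ) : Prop :=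
  ∀ t r : ℝ, 0 < r →
    partial_t u t r
      = -κ * (p * partial_r u t r ^ (p - 1) * partial_rr u t r + (m / r) * partial_r u t r ^ p)
        + k * Real.exp (q * u t r)

section rescale

variable (u : ℝ → ℝ → ℝ) (a b c : ℝ)

lemma deriv_rescale_right (t : ℝ) :
    deriv (fun s => rescale u a b c t s) = fun s => b * partial_r u (a * t) (b * s) := by
  funext s
  simp only [rescale, deriv_sub_const, partial_r]
  exact deriv_comp_mul_left b (fun y => u (a * t) y) s

lemma partial_t_rescale (t r : ℝ) :
    partial_t (rescale u a b c) t r = a * partial_t u (a * t) (b * r) := by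
  simp only [partial_t, rescale, deriv_sub_const]
  exact deriv_comp_mul_left a (fun s => u s (b * r)) t

lemma partial_r_rescale (t r : ℝ) :
    partial_r (rescale u a b c) t r = b * partial_r u (a * t) (b * r) :=
  congrFun (deriv_rescale_right u a b c t) r

lemma partial_rr_rescale (t r : ℝ) :
    partial_rr (rescale u a b c) t r = b ^ 2 * partial_rr u (a * t) (b * r) := by
  rw [partial_rr, deriv_rescale_right, deriv_const_mul_field, partial_rr,
    deriv_comp_mul_left b (partial_r u (a * t)), smul_eq_mul, pow_two, mul_assoc]
  rfl

lemma partial_r_rescale_pos (hb : 0 < b) (hur : ∀ t r : ℝ, 0 < r → 0 < partial_r u t r)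
    {t r : ℝ} (hr : 0 < r) : 0 < partial_r (rescale u a b c) t r := by
  rw [partial_r_rescale]
  exact mul_pos hb (hur _ _ (mul_pos hb hr))

end rescale

lemma diffusion_term_scale {p m b X : ℝ} (hb : 0 < b) (hX : 0 < X) (Y r : ℝ) :
    p * (b * X) ^ (p - 1) * (b ^ 2 * Y) + m / r * (b * X) ^ p
      = b ^ (p + 1) * (p * X ^ (p - 1) * Y + m / (b * r) * X ^ p) := by
  rw [Real.mul_rpow hb.le hX.le, Real.mul_rpow hb.le hX.le, mul_add]
  congr 1
  · rw [show p + 1 = p - 1 + 2 by ring, Real.rpow_add hb, Real.rpow_two]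
    ring
  · rw [Real.rpow_add_one hb.ne']
    field_simp

lemma solvesDiffusionReaction_rescale {κ k m p q a b c : ℝ} {u : ℝ → ℝ → ℝ}
    (hb : 0 < b) (hab : a = b ^ (p + 1)) (hac : Real.exp (-(q * c)) = a)
    (hur : ∀ t r : ℝ, 0 < r → 0 < partial_r u t r)
    (hpde : SolvesDiffusionReaction κ k m p q u) :
    SolvesDiffusionReaction κ k m p q (rescale u a b c) := by
  intro t r hr
  have hbr : 0 < b * r := mul_pos hb hr
  have h_source : Real.exp (q * rescale u a b c t r) = a * Real.exp (q * u (a * t) (b * r)) := by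
    rw [rescale, ← hac, ← Real.exp_add]; ring_nf
  rw [partial_t_rescale, hpde _ _ hbr, partial_r_rescale, partial_rr_rescale, h_source,
    diffusion_term_scale hb (hur _ _ hbr), ← hab]
  ring

theorem symmetry_X8_general (κ k m ε p q : ℝ)
    (u : ℝ → ℝ → ℝ)
    (hur : ∀ t r : ℝ, 0 < r → 0 < partial_r u t r)
    (hpde : ∀ t r : ℝ, 0 < r →
      partial_t u t r
        = -κ * (p * partial_r u t r ^ (p - 1) * partial_rr u t r
            + (m / r) * partial_r u t r ^ p)
          + k * Real.exp (q * u t r))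
    (v : ℝ → ℝ → ℝ)
    (hv : ∀ t r : ℝ,
      v t r = u (Real.exp (-(p + 1) * q * ε) * t) (Real.exp (-q * ε) * r) - (p + 1) * ε) :
    ∀ t r : ℝ, 0 < r →
      0 < partial_r v t r ∧
      partial_t v t r
        = -κ * (p * partial_r v t r ^ (p - 1) * partial_rr v t r
            + (m / r) * partial_r v t r ^ p)
          + k * Real.exp (q * v t r) := by
  have hv' : v = rescale u (Real.exp (-(p + 1) * q * ε)) (Real.exp (-q * ε)) ((p + 1) * ε) :=
    funext₂ hv
  have hab : Real.exp (-(p + 1) * q * ε) = Real.exp (-q * ε) ^ (p + 1) := by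
    rw [← Real.exp_mul]; ring_nf
  have hac : Real.exp (-(q * ((p + 1) * ε))) = Real.exp (-(p + 1) * q * ε) := by ring_nf
  intro t r hr
  subst hv'
  exact ⟨partial_r_rescale_pos u _ _ _ (Real.exp_pos _) hur hr,
    solvesDiffusionReaction_rescale (Real.exp_pos _) hab hac hur hpde t r hr⟩

/-- The scaling-and-shift point symmetry X₈ of the 1-dimensional nonlinear
diffusion-reaction equation with power-law diffusivity and exponential source. -/
theorem symmetry_X8 (κ k m ε p q : ℝ)
    (hp : p ≠ -1 ∧ p ≠ 0 ∧ p ≠ 1) (hq : q ≠ 0)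
    (u : ℝ → ℝ → ℝ) (hu : IsC2On u)
    (hur : ∀ t r : ℝ, 0 < r → 0 < partial_r u t r)
    (hpde : ∀ t r : ℝ, 0 < r →
      partial_t u t r
        = -κ * (p * partial_r u t r ^ (p - 1) * partial_rr u t r
            + (m / r) * partial_r u t r ^ p)
          + k * Real.exp (q * u t r))
    (v : ℝ → ℝ → ℝ)
    (hv : ∀ t r : ℝ,
      v t r = u (Real.exp (-(p + 1) * q * ε) * t) (Real.exp (-q * ε) * r) - (p + 1) * ε) :
    ∀ t r : ℝ, 0 < r →
      0 < partial_r v t r ∧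
      partial_t v t r
        = -κ * (p * partial_r v t r ^ (p - 1) * partial_rr v t r
            + (m / r) * partial_r v t r ^ p)
          + k * Real.exp (q * v t r) :=
  symmetry_X8_general κ k m ε p q u hur hpde v hv
end
end
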